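/- arXiv:1912.05938 — 3 statements merged into one kernel-verified Lean document; each statement's English description precedes it below -/
import Mathlib

section
/- Let n ≥ 1 and ε = (ε_{ij}) an n×n skew-symmetric integer matrix defining a Poisson bracket {X_i, X_j} = ε_{ij}·X_i·X_j on functions of (ℂ*)^n. Fix k and define new variables X'_k = X_k^{-1} and X'_j = X_j·(1 + X_k^{-sgn(ε_{jk})})^{-ε_{jk}} for j ≠ k. Then the new variables satisfy {X'_i, X'_j} = ε'_{ij}·X'_i·X'_j, where ε' is the mutated exchange matrix ε'_{ij} = -ε_{ij} if k ∈ {i,j} and ε'_{ij} = ε_{ij} + max(ε_{ik},0)max(ε_{kj},0) - max(-ε_{ik},0)max(-ε_{kj},0) otherwise. In other words, cluster Poisson mutation is a Poisson map. -/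
/-- The cluster Poisson mutation at index k: the j-th new coordinate as a function
on the torus (ℂ*)ⁿ. -/
noncomputable def clusterMut (n : ℕ) (ε : Matrix (Fin n) (Fin n) ℤ) (k j : Fin n) :
    (Fin n → ℂ) → ℂ := fun X =>
  if j = k then (X k)⁻¹
  else X j * (1 + X k ^ (-(Int.sign (ε j k)))) ^ (-(ε j k))

/-!
In the logarithmic coordinates `log X_i` the bracket has the constant matrix `ε`, so for monomial-like
functions `{f, g} = f g ∑ ε_ij (X_i ∂_i log f) (X_j ∂_j log g)`. The logarithmic gradient of `X'_k` is
`-e_k`, and that of `X'_a` (`a ≠ k`) is `e_a + c_a e_k` with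
`c_a = [ε_ak]₊ p + [-ε_ak]₊ (1 - p)`, `p = (1 + X_k)⁻¹`. Expanding the bilinear form,
`ε_ak c_b - ε_bk c_a = [ε_ak]₊ [-ε_bk]₊ - [-ε_ak]₊ [ε_bk]₊` because the weights `p` and `1 - p`
add up to `1`, which is exactly the correction term of matrix mutation.
-/

open Finset

/-- At `p = (1 + t)⁻¹` this is `t ∂_t log` of the exchange factor `(1 + t ^ (-sgn e)) ^ (-e)`. The second
weight is written `1 - p` rather than `t p` so that the weights add up to `1` even where `1 + t = 0`. -/
def exchangeCoeff {R : Type*} [Ring R] (e : ℤ) (p : R) : R :=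
  (max e 0 : ℤ) * p + (max (-e) 0 : ℤ) * (1 - p)

lemma intCast_mul_exchangeCoeff_sub_mul_exchangeCoeff {R : Type*} [CommRing R] (x y : ℤ) (p : R) :
    (x : R) * exchangeCoeff y p - y * exchangeCoeff x p
      = ((max x 0 * max (-y) 0 - max (-x) 0 * max y 0 : ℤ) : R) := by
  have hx : ((max x 0 - max (-x) 0 : ℤ) : R) = x :=
    congrArg _ (max_zero_sub_max_neg_zero_eq_self x)
  have hy : ((max y 0 - max (-y) 0 : ℤ) : R) = y :=
    congrArg _ (max_zero_sub_max_neg_zero_eq_self y)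
  unfold exchangeCoeff
  push_cast at hx hy ⊢
  linear_combination (-((max y 0 : ℤ) * p + (max (-y) 0 : ℤ) * (1 - p) : R)) * hx
    + ((max x 0 : ℤ) * p + (max (-x) 0 : ℤ) * (1 - p) : R) * hy

lemma exchangeCoeff_of_nonneg {R : Type*} [Ring R] {e : ℤ} (he : 0 ≤ e) (p : R) :
    exchangeCoeff e p = e * p := by
  simp [exchangeCoeff, he]

lemma exchangeCoeff_of_nonpos {R : Type*} [Ring R] {e : ℤ} (he : e ≤ 0) (p : R) :
    exchangeCoeff e p = -e * (1 - p) := by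
  simp [exchangeCoeff, he]

lemma hasDerivAt_exchangeFactor {𝕜 : Type*} [NontriviallyNormedField 𝕜] (e : ℤ) {t : 𝕜}
    (ht : t ≠ 0) (hu : 1 + t ^ (-e.sign) ≠ 0) :
    HasDerivAt (fun s : 𝕜 => (1 + s ^ (-e.sign)) ^ (-e))
      ((1 + t ^ (-e.sign)) ^ (-e) * exchangeCoeff e (1 + t)⁻¹ / t) t := by
  refine ((hasDerivAt_zpow (-e) _ (Or.inl hu)).comp t
    ((hasDerivAt_zpow (-e.sign) t (Or.inl ht)).const_add 1)).congr_deriv ?_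
  rcases lt_trichotomy e 0 with he | rfl | he
  · rw [Int.sign_eq_neg_one_of_neg he, neg_neg, zpow_one] at hu ⊢
    rw [exchangeCoeff_of_nonpos he.le, zpow_sub_one₀ hu, sub_self, zpow_zero]
    field_simp
    push_cast
    ring
  · simp [exchangeCoeff]
  · rw [Int.sign_eq_one_of_pos he, zpow_neg_one] at hu ⊢
    have hu' : 1 + t ≠ 0 := by
      contrapose! hu
      field_simp
      linear_combination hu
    rw [exchangeCoeff_of_nonneg he.le, zpow_sub_one₀ hu, show (-1 : ℤ) - 1 = -2 by norm_num,
      zpow_neg t 2]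
    push_cast
    field_simp
    rw [add_comm t 1]
    field_simp

section LogGradient

variable {ι 𝕜 : Type*} [Fintype ι] [DecidableEq ι] [NontriviallyNormedField 𝕜]
  {g : 𝕜 → 𝕜} {g' : 𝕜} {X : ι → 𝕜} {k : ι}

lemma mul_fderiv_comp_apply_single (hg : HasDerivAt g g' (X k)) (i : ι) :
    X i * fderiv 𝕜 (fun Y => g (Y k)) X (Pi.single i 1) = X k * g' * (Pi.single k 1 : ι → 𝕜) i := by
  have hd : HasFDerivAt (fun Y : ι → 𝕜 => g (Y k)) (g' • ContinuousLinearMap.proj k) X :=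
    hg.comp_hasFDerivAt X (hasFDerivAt_apply (𝕜 := 𝕜) (F' := fun _ => 𝕜) k X)
  rw [hd.fderiv]
  rcases eq_or_ne i k with rfl | hik <;> simp [*]

lemma mul_fderiv_apply_mul_comp_apply_single {a : ι} (hak : a ≠ k) (hg : HasDerivAt g g' (X k))
    (i : ι) :
    X i * fderiv 𝕜 (fun Y => Y a * g (Y k)) X (Pi.single i 1)
      = X a * (g (X k) * (Pi.single a 1 : ι → 𝕜) i + X k * g' * (Pi.single k 1 : ι → 𝕜) i) := by
  have hd : HasFDerivAt (fun Y : ι → 𝕜 => g (Y k)) (g' • ContinuousLinearMap.proj k) X :=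
    hg.comp_hasFDerivAt X (hasFDerivAt_apply (𝕜 := 𝕜) (F' := fun _ => 𝕜) k X)
  have hm : HasFDerivAt (fun Y : ι → 𝕜 => Y a * g (Y k)) _ X :=
    (hasFDerivAt_apply (𝕜 := 𝕜) (F' := fun _ => 𝕜) a X).mul hd
  rw [hm.fderiv]
  rcases eq_or_ne i k with rfl | hik
  · simp [hak, mul_left_comm]
  rcases eq_or_ne i a with rfl | hia
  · simp [hik]
  · simp [hik, hia]

end LogGradient

section Mutation

variable {ι R : Type*} [Fintype ι] [DecidableEq ι] [CommRing R]

def Matrix.mutate (ε : Matrix ι ι ℤ) (k : ι) : Matrix ι ι ℤ := fun i j =>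
  if i = k ∨ j = k then -ε i j
  else ε i j + max (ε i k) 0 * max (ε k j) 0 - max (-ε i k) 0 * max (-ε k j) 0

/-- The logarithmic gradient `(X_i ∂_i log X'_a)_i` of the mutated coordinate `X'_a`,
with `p` standing for `(1 + X_k)⁻¹`. -/
def mutationLogGrad (ε : Matrix ι ι ℤ) (k : ι) (p : R) (a : ι) : ι → R :=
  if a = k then -Pi.single k 1 else Pi.single a 1 + exchangeCoeff (ε a k) p • Pi.single k 1

lemma sum_sum_mul_mutationLogGrad {ε : Matrix ι ι ℤ} (hε : ∀ i j, ε i j = -ε j i) (k : ι)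
    (p : R) (a b : ι) :
    ∑ i, ∑ j, (ε i j : R) * mutationLogGrad ε k p a i * mutationLogGrad ε k p b j
      = ε.mutate k a b := by
  have hkk : ε k k = 0 := by linarith [hε k k]
  by_cases hak : a = k <;> by_cases hbk : b = k <;>
    simp only [mutationLogGrad, Matrix.mutate, hak, hbk, hkk, ↓reduceIte, Pi.add_apply,
      Pi.neg_apply, Pi.single_apply, Pi.smul_apply, smul_eq_mul, mul_ite, mul_one, mul_zero,
      mul_neg, neg_mul, mul_add, add_mul, ite_mul, zero_mul, sum_add_distrib, sum_ite_eq',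
      sum_neg_distrib, mem_univ, Int.cast_zero, add_zero, or_self, or_true, true_or,
      Int.cast_neg, Int.cast_sub, Int.cast_add, Int.cast_mul, neg_zero, neg_neg]
  have key := intCast_mul_exchangeCoeff_sub_mul_exchangeCoeff (R := R) (ε a k) (ε b k) p
  rw [hε k b, neg_neg]
  push_cast at key ⊢
  linear_combination key

end Mutation

lemma mul_fderiv_clusterMut {n : ℕ} {ε : Matrix (Fin n) (Fin n) ℤ} {k a : Fin n} {X : Fin n → ℂ}
    (hXk : X k ≠ 0) (hu : 1 + X k ^ (-(ε a k).sign) ≠ 0) (i : Fin n) :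
    X i * fderiv ℂ (clusterMut n ε k a) X (Pi.single i 1)
      = clusterMut n ε k a X * mutationLogGrad ε k (1 + X k)⁻¹ a i := by
  by_cases hak : a = k
  · subst hak
    have hinv : clusterMut n ε a a = fun Y => (Y a)⁻¹ := funext fun Y => if_pos rfl
    rw [hinv, mul_fderiv_comp_apply_single (hasDerivAt_inv hXk)]
    simp [mutationLogGrad, sq, hXk]
  · have hprod : clusterMut n ε k a = fun Y => Y a * (1 + Y k ^ (-(ε a k).sign)) ^ (-ε a k) :=
      funext fun Y => if_neg hak
    rw [hprod, mul_fderiv_apply_mul_comp_apply_single hak (hasDerivAt_exchangeFactor _ hXk hu)]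
    rw [mutationLogGrad, if_neg hak]
    simp only [Pi.add_apply, Pi.smul_apply, smul_eq_mul]
    field_simp

theorem cluster_mutation_is_poisson_general
    (n : ℕ)
    (ε : Matrix (Fin n) (Fin n) ℤ) (hskew : ∀ i j, ε i j = - ε j i)
    (k : Fin n)
    (ε' : Matrix (Fin n) (Fin n) ℤ)
    (hε' : ∀ i j, ε' i j =
      if i = k ∨ j = k then - ε i j
      else ε i j + max (ε i k) 0 * max (ε k j) 0 - max (- ε i k) 0 * max (- ε k j) 0)
    (X : Fin n → ℂ) (hX : ∀ j, X j ≠ 0)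
    (h1 : ∀ j, 1 + X k ^ (-(Int.sign (ε j k))) ≠ 0)
    (a b : Fin n) :
    ∑ i : Fin n, ∑ j : Fin n, (ε i j : ℂ) * X i * X j
        * fderiv ℂ (clusterMut n ε k a) X (Pi.single i 1)
        * fderiv ℂ (clusterMut n ε k b) X (Pi.single j 1)
      = (ε' a b : ℂ) * clusterMut n ε k a X * clusterMut n ε k b X := by
  obtain rfl : ε' = ε.mutate k := Matrix.ext hε'
  set L := mutationLogGrad ε k (1 + X k)⁻¹
  have hgrad (c i : Fin n) : X i * fderiv ℂ (clusterMut n ε k c) X (Pi.single i 1)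
      = clusterMut n ε k c X * L c i := mul_fderiv_clusterMut (hX k) (h1 c) i
  calc _ = ∑ i, ∑ j, (ε i j : ℂ) * (X i * fderiv ℂ (clusterMut n ε k a) X (Pi.single i 1))
          * (X j * fderiv ℂ (clusterMut n ε k b) X (Pi.single j 1)) :=
        sum_congr rfl fun i _ => sum_congr rfl fun j _ => by ring
    _ = clusterMut n ε k a X * clusterMut n ε k b X * ∑ i, ∑ j, (ε i j : ℂ) * L a i * L b j := by
        simp_rw [hgrad, mul_sum]
        exact sum_congr rfl fun i _ => sum_congr rfl fun j _ => by ring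
    _ = _ := by
        rw [sum_sum_mul_mutationLogGrad hskew]
        ring

/-- cluster Poisson mutation is a Poisson map: with the log-canonical
bracket {f,g}(X) = Σ_{i,j} ε_{ij} X_i X_j (∂f/∂X_i)(∂g/∂X_j), the mutated
coordinates X'_a satisfy {X'_a, X'_b} = ε'_{ab}·X'_a·X'_b, where ε' is the
Fomin–Zelevinsky mutation of ε at k. -/
theorem cluster_mutation_is_poisson
    (n : ℕ) (hn : 1 ≤ n)
    (ε : Matrix (Fin n) (Fin n) ℤ) (hskew : ∀ i j, ε i j = - ε j i)
    (k : Fin n)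
    (ε' : Matrix (Fin n) (Fin n) ℤ)
    (hε' : ∀ i j, ε' i j =
      if i = k ∨ j = k then - ε i j
      else ε i j + max (ε i k) 0 * max (ε k j) 0 - max (- ε i k) 0 * max (- ε k j) 0)
    (X : Fin n → ℂ) (hX : ∀ j, X j ≠ 0)
    (h1 : ∀ j, 1 + X k ^ (-(Int.sign (ε j k))) ≠ 0)
    (a b : Fin n) :
    ∑ i : Fin n, ∑ j : Fin n, (ε i j : ℂ) * X i * X j
        * fderiv ℂ (clusterMut n ε k a) X (Pi.single i 1)
        * fderiv ℂ (clusterMut n ε k b) X (Pi.single j 1)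
      = (ε' a b : ℂ) * clusterMut n ε k a X * clusterMut n ε k b X :=
  cluster_mutation_is_poisson_general n ε hskew k ε' hε' X hX h1 a b
end

section
/- Let U ⊆ ℂ be open and connected and let M : U → Mat₂(ℂ) and λ : U → ℂ be holomorphic maps such that for every η ∈ U, λ(η) is an eigenvalue of M(η), and such that M(η) - λ(η)·I is not identically zero on U (i.e. the entries a(η), b(η), c(η), d(η) of M(η) - λ(η)I do not all vanish identically). Then there exists a holomorphic map ℓ : U → ℙ¹(ℂ) such that for every η with M(η) ≠ λ(η)·I, the point ℓ(η) spans the λ(η)-eigenspace of M(η). In particular the eigenline, defined a priori only on a dense open subset, extends holomorphically across the exceptional points. -/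
/-!
Since `det (M - λI) = 0` on `U`, the columns `(d, -c)` and `(-b, a)` of the adjugate of
`A = M - λI` lie in the kernel of `A`, and for a `2 × 2` matrix the adjugate vanishes only where
`A` does. Near any point `z₀` write `adj A(z) = (z - z₀)ⁿ G(z)` with `G` holomorphic and
`G(z₀) ≠ 0`: a nonvanishing column of `G` is a holomorphic frame of the kernel near `z₀`, first
off `z₀` and then at `z₀` by the identity theorem. By the identity theorem again the zeros of `A`
are isolated, so two such frames are proportional on a punctured neighbourhood of each point;
their determinant is holomorphic, hence vanishes identically, and the frames glue to a map
into `ℙ¹`.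
-/

open Filter Topology
-- The entrywise sup norm: analyticity of a matrix-valued map is analyticity of its entries.
open scoped Matrix.Norms.Elementwise

namespace Matrix

theorem sub_smul_one_mulVec_eq_zero_iff {R n : Type*} [CommRing R] [Fintype n] [DecidableEq n]
    (M : Matrix n n R) (c : R) (v : n → R) : (M - c • 1) *ᵥ v = 0 ↔ M *ᵥ v = c • v := by
  rw [sub_mulVec, smul_mulVec, one_mulVec, sub_eq_zero]

theorem det_eq_zero_of_mulVec_eq_zero {K n : Type*} [Field K] [Fintype n] [DecidableEq n]
    {B X : Matrix n n K} (hB : B ≠ 0) (hX : ∀ i, B *ᵥ X i = 0) : X.det = 0 := by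
  obtain ⟨k, hk⟩ : ∃ k, B k ≠ 0 := by
    by_contra! h
    exact hB (funext h)
  refine exists_mulVec_eq_zero_iff.mp ⟨B k, hk, funext fun i => ?_⟩
  simpa [mulVec, dotProduct_comm] using congrFun (hX i) k

theorem mulVec_adjugate_col {R n : Type*} [CommRing R] [Fintype n] [DecidableEq n]
    (A : Matrix n n R) (j : n) : A *ᵥ (adjugate A).col j = A.det • Pi.single j 1 := by
  rw [← mulVec_single_one, mulVec_mulVec, mul_adjugate, smul_mulVec, one_mulVec]

theorem adjugate_eq_zero_iff_fin_two {R : Type*} [CommRing R] {A : Matrix (Fin 2) (Fin 2) R} :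
    adjugate A = 0 ↔ A = 0 := by
  constructor
  · intro h
    simpa [adjugate_adjugate A (by decide : Fintype.card (Fin 2) ≠ 1)] using congrArg adjugate h
  · rintro rfl
    exact adjugate_zero

end Matrix

theorem Projectivization.mk_eq_mk_iff_det_eq_zero {K : Type*} [Field K] {v w : Fin 2 → K}
    (hv : v ≠ 0) (hw : w ≠ 0) : mk K v hv = mk K w hw ↔ (Matrix.of ![v, w]).det = 0 := by
  rw [← not_iff_not, mk_eq_mk_iff', not_exists, ← LinearIndependent.pair_iff' hw,
    LinearIndependent.pair_symm_iff, ← ne_eq, ← isUnit_iff_ne_zero,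
    ← Matrix.isUnit_iff_isUnit_det, ← Matrix.linearIndependent_rows_iff_isUnit]
  rfl

section Analytic

open Matrix

variable {𝕜 : Type*} [NontriviallyNormedField 𝕜]

theorem analyticAt_matrix_iff {m n : Type*} [Fintype m] [Fintype n] {A : 𝕜 → Matrix m n 𝕜}
    {z : 𝕜} : AnalyticAt 𝕜 A z ↔ ∀ i j, AnalyticAt 𝕜 (fun x => A x i j) z :=
  analyticAt_pi_iff.trans (forall_congr' fun _ => analyticAt_pi_iff)

theorem AnalyticAt.matrix_mulVec {m n : Type*} [Fintype m] [Fintype n] {A : 𝕜 → Matrix m n 𝕜}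
    {v : 𝕜 → n → 𝕜} {z : 𝕜} (hA : AnalyticAt 𝕜 A z) (hv : AnalyticAt 𝕜 v z) :
    AnalyticAt 𝕜 (fun x => A x *ᵥ v x) z :=
  analyticAt_pi_iff.mpr fun i => Finset.analyticAt_fun_sum _ fun j _ =>
    (analyticAt_matrix_iff.mp hA i j).mul (analyticAt_pi_iff.mp hv j)

theorem AnalyticAt.matrix_adjugate_fin_two {A : 𝕜 → Matrix (Fin 2) (Fin 2) 𝕜} {z : 𝕜}
    (hA : AnalyticAt 𝕜 A z) : AnalyticAt 𝕜 (fun x => adjugate (A x)) z := by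
  have hentry := analyticAt_matrix_iff.mp hA
  refine analyticAt_matrix_iff.mpr fun i j => ?_
  fin_cases i <;> fin_cases j <;> simp [adjugate_fin_two, hentry, (hentry _ _).fun_neg]

theorem AnalyticAt.det_of_fin_two {v w : 𝕜 → Fin 2 → 𝕜} {z : 𝕜} (hv : AnalyticAt 𝕜 v z)
    (hw : AnalyticAt 𝕜 w z) : AnalyticAt 𝕜 (fun x => (of ![v x, w x]).det) z := by
  simp only [det_fin_two, of_apply, cons_val_zero, cons_val_one]
  have hv' := analyticAt_pi_iff.mp hv
  have hw' := analyticAt_pi_iff.mp hw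
  exact ((hv' 0).mul (hw' 1)).sub ((hv' 1).mul (hw' 0))

theorem AnalyticOnNhd.eventually_ne_zero_of_preconnected {E : Type*} [NormedAddCommGroup E]
    [NormedSpace 𝕜 E] {f : 𝕜 → E} {U : Set 𝕜} (hf : AnalyticOnNhd 𝕜 f U) (hU : IsPreconnected U)
    (hne : ∃ z ∈ U, f z ≠ 0) {z₀ : 𝕜} (hz₀ : z₀ ∈ U) : ∀ᶠ z in 𝓝[≠] z₀, f z ≠ 0 := by
  refine (hf z₀ hz₀).eventually_eq_zero_or_eventually_ne_zero.resolve_left fun hzero => ?_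
  obtain ⟨z, hz, hfz⟩ := hne
  exact hfz (hf.eqOn_zero_of_preconnected_of_eventuallyEq_zero hU hz₀ hzero hz)

theorem exists_analytic_kernel_frame [CompleteSpace 𝕜] {A : 𝕜 → Matrix (Fin 2) (Fin 2) 𝕜}
    {z₀ : 𝕜} (hA : AnalyticAt 𝕜 A z₀) (hdet : ∀ᶠ z in 𝓝 z₀, (A z).det = 0)
    (hA0 : ∃ᶠ z in 𝓝[≠] z₀, A z ≠ 0) :
    ∃ v : 𝕜 → Fin 2 → 𝕜, ∀ᶠ z in 𝓝 z₀, AnalyticAt 𝕜 v z ∧ v z ≠ 0 ∧ A z *ᵥ v z = 0 := by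
  have hadj : ¬∀ᶠ z in 𝓝 z₀, adjugate (A z) = 0 := by
    simpa only [adjugate_eq_zero_iff_fin_two, not_eventually] using
      hA0.filter_mono nhdsWithin_le_nhds
  obtain ⟨n, G, hG, hG0, hadjG⟩ :=
    hA.matrix_adjugate_fin_two.exists_eventuallyEq_pow_smul_nonzero_iff.mpr hadj
  obtain ⟨j, hj⟩ : ∃ j, (G z₀).col j ≠ 0 := by
    by_contra! h
    exact hG0 (funext fun i => funext fun j => congrFun (h j) i)
  set v := fun z => (G z).col j
  have hv : AnalyticAt 𝕜 v z₀ :=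
    analyticAt_pi_iff.mpr fun i => analyticAt_matrix_iff.mp hG i j
  have hker : ∀ᶠ z in 𝓝 z₀, A z *ᵥ v z = 0 := by
    rw [← (hA.matrix_mulVec hv).frequently_zero_iff_eventually_zero]
    refine hA0.mp (eventually_nhdsWithin_iff.mpr ?_)
    filter_upwards [hdet, hadjG] with z hdet hadjG hz _
    have hcol := mulVec_adjugate_col (A z) j
    rw [hdet, zero_smul, hadjG, show ((z - z₀) ^ n • G z).col j = (z - z₀) ^ n • v z from rfl,
      mulVec_smul] at hcol
    exact (smul_eq_zero.mp hcol).resolve_left (pow_ne_zero _ (sub_ne_zero.mpr hz))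
  exact ⟨v, hv.eventually_analyticAt.and ((hv.continuousAt.eventually_ne hj).and hker)⟩

theorem mk_eq_mk_of_mulVec_eq_zero {A : 𝕜 → Matrix (Fin 2) (Fin 2) 𝕜} {v w : 𝕜 → Fin 2 → 𝕜}
    {z : 𝕜} (hA : ∃ᶠ x in 𝓝[≠] z, A x ≠ 0) (hv : AnalyticAt 𝕜 v z) (hw : AnalyticAt 𝕜 w z)
    (hAv : ∀ᶠ x in 𝓝 z, A x *ᵥ v x = 0) (hAw : ∀ᶠ x in 𝓝 z, A x *ᵥ w x = 0)
    (hv0 : v z ≠ 0) (hw0 : w z ≠ 0) :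
    Projectivization.mk 𝕜 (v z) hv0 = Projectivization.mk 𝕜 (w z) hw0 := by
  rw [Projectivization.mk_eq_mk_iff_det_eq_zero]
  refine ((hv.det_of_fin_two hw).frequently_zero_iff_eventually_zero.mp ?_).self_of_nhds
  refine hA.mp (eventually_nhdsWithin_of_eventually_nhds ?_)
  filter_upwards [hAv, hAw] with x hvx hwx hx
  exact det_eq_zero_of_mulVec_eq_zero hx fun i => by fin_cases i; exacts [hvx, hwx]

theorem exists_analytic_kernel_line [CompleteSpace 𝕜] {A : 𝕜 → Matrix (Fin 2) (Fin 2) 𝕜}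
    {U : Set 𝕜} (hU : IsOpen U) (hA : AnalyticOnNhd 𝕜 A U) (hdet : ∀ z ∈ U, (A z).det = 0)
    (hA0 : ∀ z ∈ U, ∃ᶠ x in 𝓝[≠] z, A x ≠ 0) :
    ∃ ℓ : 𝕜 → Projectivization 𝕜 (Fin 2 → 𝕜),
      (∀ z₀ ∈ U, ∃ W : Set 𝕜, IsOpen W ∧ z₀ ∈ W ∧ W ⊆ U ∧
        ∃ v : 𝕜 → Fin 2 → 𝕜, DifferentiableOn 𝕜 v W ∧
          ∀ z ∈ W, ∃ hv : v z ≠ 0, ℓ z = Projectivization.mk 𝕜 (v z) hv) ∧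
      (∀ z ∈ U, ∃ (v : Fin 2 → 𝕜) (hv : v ≠ 0), ℓ z = Projectivization.mk 𝕜 v hv ∧ A z *ᵥ v = 0) := by
  classical
  have hframe (z : 𝕜) (hz : z ∈ U) : ∃ v : 𝕜 → Fin 2 → 𝕜,
      ∀ᶠ x in 𝓝 z, AnalyticAt 𝕜 v x ∧ v x ≠ 0 ∧ A x *ᵥ v x = 0 :=
    exists_analytic_kernel_frame (hA z hz) (eventually_of_mem (hU.mem_nhds hz) hdet) (hA0 z hz)
  choose! v hv using hframe
  let ℓ : 𝕜 → Projectivization 𝕜 (Fin 2 → 𝕜) := fun z =>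
    if h : v z z = 0 then Classical.arbitrary _ else .mk 𝕜 (v z z) h
  have hℓ (z : 𝕜) (h : v z z ≠ 0) : ℓ z = .mk 𝕜 (v z z) h := dif_neg h
  refine ⟨ℓ, fun z₀ hz₀ => ?_, fun z hz => ?_⟩
  · obtain ⟨W, hWv, hWo, hz₀W⟩ := eventually_nhds_iff.mp ((hv z₀ hz₀).and (hU.eventually_mem hz₀))
    refine ⟨W, hWo, hz₀W, fun z hz => (hWv z hz).2, v z₀,
      fun z hz => (hWv z hz).1.1.differentiableWithinAt, fun z hz => ⟨(hWv z hz).1.2.1, ?_⟩⟩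
    have hzU := (hWv z hz).2
    have hvz := (hv z hzU).self_of_nhds
    rw [hℓ z hvz.2.1]
    exact mk_eq_mk_of_mulVec_eq_zero (hA0 z hzU) hvz.1 (hWv z hz).1.1
      ((hv z hzU).mono fun _ h => h.2.2)
      (eventually_of_mem (hWo.mem_nhds hz) fun x hx => (hWv x hx).1.2.2) _ _
  · have hvz := (hv z hz).self_of_nhds
    exact ⟨v z z, hvz.2.1, hℓ z hvz.2.1, hvz.2.2⟩

end Analytic

/-- holomorphic extension of the eigenline.  Let U ⊆ ℂ be open and
connected, M : U → Mat₂(ℂ) and λ : U → ℂ holomorphic with λ(η) an eigenvalue of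
M(η) for all η ∈ U, and M - λI not identically zero on U.  Then there is a map
ℓ : U → ℙ¹(ℂ) which is holomorphic (locally on U it admits a nonvanishing
holomorphic lift to ℂ² ∖ {0}) and which spans the λ(η)-eigenspace of M(η) at
every η ∈ U with M(η) ≠ λ(η)·I. -/
theorem eigenline_extends_holomorphically
    (U : Set ℂ) (hU : IsOpen U) (hUconn : IsConnected U)
    (M : ℂ → Matrix (Fin 2) (Fin 2) ℂ) (lam : ℂ → ℂ)
    (hM : ∀ i j, DifferentiableOn ℂ (fun η => M η i j) U)
    (hlam : DifferentiableOn ℂ lam U)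
    (heig : ∀ η ∈ U, ∃ v : Fin 2 → ℂ, v ≠ 0 ∧ (M η).mulVec v = lam η • v)
    (hne : ∃ η ∈ U, M η ≠ lam η • (1 : Matrix (Fin 2) (Fin 2) ℂ)) :
    ∃ ℓ : ℂ → Projectivization ℂ (Fin 2 → ℂ),
      (∀ η₀ ∈ U, ∃ W : Set ℂ, IsOpen W ∧ η₀ ∈ W ∧ W ⊆ U ∧
        ∃ v : ℂ → (Fin 2 → ℂ), DifferentiableOn ℂ v W ∧
          ∀ η ∈ W, ∃ hv : v η ≠ 0, ℓ η = Projectivization.mk ℂ (v η) hv) ∧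
      (∀ η ∈ U, M η ≠ lam η • (1 : Matrix (Fin 2) (Fin 2) ℂ) →
        ∃ (v : Fin 2 → ℂ) (hv : v ≠ 0),
          ℓ η = Projectivization.mk ℂ v hv ∧ (M η).mulVec v = lam η • v) := by
  set A := fun η => M η - lam η • (1 : Matrix (Fin 2) (Fin 2) ℂ)
  have hMan : AnalyticOnNhd ℂ M U := fun η hη =>
    analyticAt_matrix_iff.mpr fun i j => (hM i j).analyticOnNhd hU η hη
  have hA : AnalyticOnNhd ℂ A U := hMan.sub ((hlam.analyticOnNhd hU).smul analyticOnNhd_const)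
  have hdet (η : ℂ) (hη : η ∈ U) : (A η).det = 0 := by
    obtain ⟨v, hv, hMv⟩ := heig η hη
    exact Matrix.exists_mulVec_eq_zero_iff.mp
      ⟨v, hv, (Matrix.sub_smul_one_mulVec_eq_zero_iff _ _ _).mpr hMv⟩
  have hAne (η : ℂ) (hη : η ∈ U) : ∃ᶠ z in 𝓝[≠] η, A z ≠ 0 :=
    (hA.eventually_ne_zero_of_preconnected hUconn.isPreconnected
      (by simpa [A, sub_eq_zero] using hne) hη).frequently
  obtain ⟨ℓ, hℓ, hker⟩ := exists_analytic_kernel_line hU hA hdet hAne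
  refine ⟨ℓ, hℓ, fun η hη _ => ?_⟩
  obtain ⟨v, hv, hℓv, hAv⟩ := hker η hη
  exact ⟨v, hv, hℓv, (Matrix.sub_smul_one_mulVec_eq_zero_iff _ _ _).mp hAv⟩
end

section
/- Let 𝒜 be an abelian category of finite length (every object is both noetherian and artinian), and let Z : K(𝒜) → ℂ be a stability function, i.e. a group homomorphism on the Grothendieck group such that Z(E) lies in the semi-closed upper half plane ℋ = {r·e^{iπφ} : r > 0, 0 < φ ≤ 1} for every nonzero object E. Then Z automatically has the Harder–Narasimhan property: every nonzero object E ∈ 𝒜 admits a finite filtration 0 = E₀ ⊂ E₁ ⊂ … ⊂ E_n = E whose successive quotients F_j = E_j/E_{j-1} are Z-semistable with strictly decreasing phases φ(F₁) > φ(F₂) > … > φ(F_n). -/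
/-!
The subobjects of `E` form a lattice with both chain conditions, on which `P ↦ Z P` is modular,
`Z (A ⊔ B) + Z (A ⊓ B) = Z A + Z B`, and lies in the upper half plane on every strict interval
`P < Q`, since `Z Q - Z P = Z (Q / P)`. Modularity and the chain conditions show that `Z` takes
only finitely many values above any `P`, so among the `D > P` there is one of maximal phase
`φ(D / P)`, and a largest such `D`; by the see-saw property every `D' > D` then has
`φ(D' / D) < φ(D / P)`. Iterating from `⊥` gives the Harder–Narasimhan filtration: maximality of
the phase is semistability of the factor, and the see-saw inequality makes the phases decrease.
-/

open CategoryTheory CategoryTheory.Limits ComplexConjugate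

namespace Complex

lemma arg_pos_iff {z : ℂ} : 0 < z.arg ↔ 0 ≤ z.im ∧ (z.im = 0 → z.re < 0) := by
  rw [lt_iff_le_and_ne, arg_nonneg_iff, ne_comm, Ne, arg_eq_zero_iff, not_and]
  grind

lemma arg_add_pos {z w : ℂ} (hz : 0 < z.arg) (hw : 0 < w.arg) : 0 < (z + w).arg := by
  rw [arg_pos_iff] at *
  refine ⟨by simp only [add_im]; linarith, fun h => ?_⟩
  simp only [add_im, add_re] at *
  have := hz.2 (by linarith)
  have := hw.2 (by linarith)
  linarith

lemma im_mul_conj_eq_mul_sin_sub_arg (z w : ℂ) :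
    (w * conj z).im = ‖w‖ * ‖z‖ * Real.sin (w.arg - z.arg) := by
  rw [Real.sin_sub, mul_im, conj_re, conj_im, ← norm_mul_sin_arg w, ← norm_mul_cos_arg w,
    ← norm_mul_sin_arg z, ← norm_mul_cos_arg z]
  ring

lemma arg_le_arg_iff_im_mul_conj_nonneg {z w : ℂ} (hz : 0 < z.arg) (hw : 0 < w.arg) :
    z.arg ≤ w.arg ↔ 0 ≤ (w * conj z).im := by
  have hz0 : 0 < ‖z‖ := norm_pos_iff.mpr fun h => by simp [h] at hz
  have hw0 : 0 < ‖w‖ := norm_pos_iff.mpr fun h => by simp [h] at hw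
  rw [im_mul_conj_eq_mul_sin_sub_arg, mul_nonneg_iff_of_pos_left (by positivity)]
  constructor
  · intro h
    exact Real.sin_nonneg_of_nonneg_of_le_pi (by linarith) (by linarith [arg_le_pi w])
  · intro h
    by_contra! hlt
    linarith [Real.sin_neg_of_neg_of_neg_pi_lt (sub_neg.mpr hlt) (by linarith [arg_le_pi z])]

lemma arg_le_arg_add {z w : ℂ} (hz : 0 < z.arg) (hw : 0 < w.arg) (h : z.arg ≤ w.arg) :
    z.arg ≤ (z + w).arg := by
  rw [arg_le_arg_iff_im_mul_conj_nonneg hz (arg_add_pos hz hw), add_mul, add_im, mul_conj,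
    ofReal_im, zero_add]
  exact (arg_le_arg_iff_im_mul_conj_nonneg hz hw).mp h

end Complex

theorem finite_image_Ici_of_sup_add_inf {α G : Type*} [Lattice α] [WellFoundedLT α]
    [WellFoundedGT α] [AddCommGroup G] {v : α → G}
    (hmod : ∀ a b, v (a ⊔ b) + v (a ⊓ b) = v a + v b) (a : α) : (v '' Set.Ici a).Finite := by
  induction a using WellFoundedGT.induction with
  | _ x ih =>
  by_cases hx : IsMax x
  · rw [hx.Ici_eq, Set.image_singleton]
    exact Set.finite_singleton _
  obtain ⟨y, hxy⟩ := exists_covBy_of_wellFoundedLT hx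
  have hy := ih y hxy.lt
  refine (hy.union (hy.image (· + (v x - v y)))).subset ?_
  rintro _ ⟨b, hxb, rfl⟩
  rcases hxy.eq_or_eq (le_inf hxb hxy.le) inf_le_right with h | h
  · -- `b ⊓ y = x`, so modularity expresses `v b` through `v (b ⊔ y)`
    refine Or.inr ⟨v (b ⊔ y), ⟨b ⊔ y, le_sup_right, rfl⟩, ?_⟩
    have := hmod b y
    rw [h] at this
    simp only
    rw [eq_sub_of_add_eq this]
    abel
  · exact Or.inl ⟨b, inf_eq_right.mp h, rfl⟩

namespace HarderNarasimhan

variable {α : Type*}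

noncomputable def phase (v : α → ℂ) (a b : α) : ℝ := (v b - v a).arg

section Preorder

variable [Preorder α] {v : α → ℂ}

lemma phase_le_phase_of_le_phase (hv : ∀ {a b : α}, a < b → 0 < phase v a b) {a b c : α}
    (hab : a < b) (hbc : b < c) (h : phase v a b ≤ phase v b c) :
    phase v a b ≤ phase v a c := by
  have := Complex.arg_le_arg_add (hv hab) (hv hbc) h
  rwa [sub_add_sub_cancel'] at this

variable (v) in
structure IsHNChain {N : ℕ} (c : Fin (N + 1) → α) : Prop where
  lt : ∀ j : Fin N, c j.castSucc < c j.succ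
  semistable : ∀ (j : Fin N) (d : α), c j.castSucc < d → d ≤ c j.succ →
    phase v (c j.castSucc) d ≤ phase v (c j.castSucc) (c j.succ)
  phase_lt : ∀ j j' : Fin N, j < j' →
    phase v (c j'.castSucc) (c j'.succ) < phase v (c j.castSucc) (c j.succ)

lemma IsHNChain.cons {N : ℕ} {c : Fin (N + 1) → α} (hc : IsHNChain v c) {a : α} (ha : a < c 0)
    (hss : ∀ d, a < d → d ≤ c 0 → phase v a d ≤ phase v a (c 0))
    (hdestab : ∀ d, c 0 < d → phase v (c 0) d < phase v a (c 0)) :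
    IsHNChain v (Fin.cons a c : Fin (N + 2) → α) := by
  have hfirst : ∀ j : Fin N, phase v (c j.castSucc) (c j.succ) < phase v a (c 0) := by
    intro j
    obtain ⟨M, rfl⟩ : ∃ M, N = M + 1 := ⟨N - 1, by have := j.pos; omega⟩
    have h01 := hdestab _ (hc.lt 0)
    rcases eq_or_ne j 0 with rfl | hj
    · exact h01
    · exact (hc.phase_lt 0 j (Fin.pos_iff_ne_zero.mpr hj)).trans h01
  refine ⟨Fin.cases ?_ fun j => ?_, Fin.cases ?_ fun j => ?_, Fin.cases ?_ fun j => ?_⟩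
  · simpa using ha
  · simpa [← Fin.succ_castSucc] using hc.lt j
  · simpa using hss
  · simpa [← Fin.succ_castSucc] using hc.semistable j
  · intro j' hj'
    obtain ⟨k, rfl⟩ := Fin.exists_succ_eq.mpr (Fin.pos_iff_ne_zero.mp hj')
    simpa [← Fin.succ_castSucc] using hfirst k
  · intro j' hj'
    obtain ⟨k, rfl⟩ := Fin.exists_succ_eq.mpr (Fin.pos_iff_ne_zero.mp ((Fin.succ_pos j).trans hj'))
    simpa [← Fin.succ_castSucc] using hc.phase_lt j k (Fin.succ_lt_succ_iff.mp hj')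

end Preorder

section Lattice

variable [Lattice α] [WellFoundedLT α] [WellFoundedGT α] {v : α → ℂ}
  (hv : ∀ {a b : α}, a < b → 0 < phase v a b) (hmod : ∀ a b, v (a ⊔ b) + v (a ⊓ b) = v a + v b)
include hv hmod

lemma exists_maxDestabilizing {a : α} (ha : ¬IsMax a) :
    ∃ b, a < b ∧ (∀ d, a < d → phase v a d ≤ phase v a b) ∧
      ∀ d, b < d → phase v b d < phase v a b := by
  obtain ⟨_, ⟨b₀, hab₀, rfl⟩, hb₀⟩ := Set.exists_max_image (v '' Set.Ioi a)
    (fun z => (z - v a).arg)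
    ((finite_image_Ici_of_sup_add_inf hmod a).subset (Set.image_mono Set.Ioi_subset_Ici_self))
    ((show (Set.Ioi a).Nonempty from not_isMax_iff.mp ha).image v)
  have hmax : ∀ d, a < d → phase v a d ≤ phase v a b₀ := fun d hd => hb₀ _ ⟨d, hd, rfl⟩
  obtain ⟨b, ⟨hab, hb⟩, hbmax⟩ :=
    wellFounded_gt.has_min {b | a < b ∧ phase v a b = phase v a b₀} ⟨b₀, hab₀, rfl⟩
  refine ⟨b, hab, hb ▸ hmax, fun d hbd => ?_⟩
  by_contra! hle
  have had := phase_le_phase_of_le_phase hv hab hbd hle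
  exact hbmax d ⟨hab.trans hbd, le_antisymm (hmax d (hab.trans hbd)) (hb ▸ had)⟩ hbd

theorem exists_isHNChain [OrderTop α] (a : α) :
    ∃ (N : ℕ) (c : Fin (N + 1) → α), c 0 = a ∧ c (Fin.last N) = ⊤ ∧ IsHNChain v c := by
  induction a using WellFoundedGT.induction with
  | _ a ih =>
  by_cases ha : IsMax a
  · exact ⟨0, fun _ => a, rfl, ha.eq_top, ⟨Fin.elim0, Fin.elim0, fun j => Fin.elim0 j⟩⟩
  obtain ⟨b, hab, hss, hdestab⟩ := exists_maxDestabilizing hv hmod ha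
  obtain ⟨N, c, rfl, hcN, hc⟩ := ih b hab
  exact ⟨N + 1, Fin.cons a c, rfl, hcN, hc.cons hab (fun d had _ => hss d had) hdestab⟩

end Lattice

end HarderNarasimhan

namespace CategoryTheory

variable {𝒜 : Type*} [Category 𝒜] [Abelian 𝒜]

lemma Abelian.shortExact_cokernel {X Y : 𝒜} (f : X ⟶ Y) [Mono f] :
    (ShortComplex.mk f (cokernel.π f) (cokernel.condition f)).ShortExact :=
  { exact := ShortComplex.exact_of_g_is_cokernel _ (cokernelIsCokernel f) }

lemma Abelian.shortExact_kernel {X Y : 𝒜} (p : X ⟶ Y) [Epi p] :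
    (ShortComplex.mk (kernel.ι p) p (kernel.condition p)).ShortExact :=
  { exact := ShortComplex.exact_of_f_is_kernel _ (kernelIsKernel p) }

lemma Subobject.isPullback_ofLE_inf_sup {X : 𝒜} (A B : Subobject X) :
    IsPullback (Subobject.ofLE (A ⊓ B) A (by simp)) (Subobject.ofLE (A ⊓ B) B (by simp))
      (Subobject.ofLE A (A ⊔ B) (by simp)) (Subobject.ofLE B (A ⊔ B) (by simp)) :=
  IsPullback.of_right (h₁₂ := 𝟙 _) (v₁₃ := A.arrow) (h₂₂ := (A ⊔ B).arrow)
    (by simpa using Subobject.inf_isPullback A B) (by simp [Subobject.ofLE_comp_ofLE])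
    (IsPullback.of_horiz_isIso_mono ⟨by simp⟩)

lemma Subobject.epi_biprod_desc_ofLE_sup {X : 𝒜} (A B : Subobject X) :
    Epi (biprod.desc (Subobject.ofLE A (A ⊔ B) le_sup_left)
      (-Subobject.ofLE B (A ⊔ B) le_sup_right)) := by
  rw [Preadditive.epi_iff_cancel_zero]
  intro T k hk
  have hA : Subobject.ofLE A (A ⊔ B) le_sup_left ≫ k = 0 := by simpa using biprod.inl ≫= hk
  have hB : Subobject.ofLE B (A ⊔ B) le_sup_right ≫ k = 0 := by simpa using biprod.inr ≫= hk
  have hle : A ⊔ B ≤ Subobject.mk (kernel.ι k ≫ (A ⊔ B).arrow) :=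
    sup_le (Subobject.le_mk_of_comm (kernel.lift k _ hA) (by simp))
      (Subobject.le_mk_of_comm (kernel.lift k _ hB) (by simp))
  have hsec : Subobject.ofLE _ _ hle ≫ (Subobject.underlyingIso _).hom ≫ kernel.ι k = 𝟙 _ := by
    rw [← cancel_mono (A ⊔ B).arrow]
    simp
  rw [← Category.id_comp k, ← hsec]
  simp

lemma Subobject.not_isZero_cokernel_ofLE {X : 𝒜} {P Q : Subobject X} (h : P < Q) :
    ¬IsZero (cokernel (Subobject.ofLE P Q h.le)) := by
  intro hz
  have := Preadditive.epi_of_isZero_cokernel _ hz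
  have := isIso_of_mono_of_epi (Subobject.ofLE P Q h.le)
  exact h.not_ge (Subobject.le_of_comm (inv (Subobject.ofLE P Q h.le)) (by simp))

end CategoryTheory

namespace HarderNarasimhan

section Abelian

variable {𝒜 : Type*} [Category 𝒜] [Abelian 𝒜]

def IsAdditive (Z : 𝒜 → ℂ) : Prop :=
  ∀ S : ShortComplex 𝒜, S.ShortExact → Z S.X₂ = Z S.X₁ + Z S.X₃

namespace IsAdditive

variable {Z : 𝒜 → ℂ} (hZ : IsAdditive Z)
include hZ

lemma eq_zero_of_isZero {X : 𝒜} (hX : IsZero X) : Z X = 0 := by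
  have := hZ (ShortComplex.mk (𝟙 X) (𝟙 X) (hX.eq_of_src _ _))
    { exact := ShortComplex.exact_of_isZero_X₂ _ hX }
  simpa using this

lemma eq_add_cokernel {X Y : 𝒜} (f : X ⟶ Y) [Mono f] : Z Y = Z X + Z (cokernel f) :=
  hZ _ (Abelian.shortExact_cokernel f)

lemma eq_kernel_add {X Y : 𝒜} (p : X ⟶ Y) [Epi p] : Z X = Z (kernel p) + Z Y :=
  hZ _ (Abelian.shortExact_kernel p)

lemma congr_iso {X Y : 𝒜} (e : X ≅ Y) : Z X = Z Y := by
  rw [hZ.eq_add_cokernel e.hom, hZ.eq_zero_of_isZero (isZero_cokernel_of_epi _), add_zero]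

lemma biprod (A B : 𝒜) : Z (A ⊞ B) = Z A + Z B :=
  hZ _ (ShortComplex.Splitting.ofHasBinaryBiproduct A B).shortExact

lemma sup_add_inf {X : 𝒜} (A B : Subobject X) :
    Z ↑(A ⊔ B) + Z ↑(A ⊓ B) = Z A + Z B := by
  have hsq := Subobject.isPullback_ofLE_inf_sup A B
  have := hZ _ (.mk' hsq.exact_shortComplex' hsq.mono_shortComplex'_f
    (Subobject.epi_biprod_desc_ofLE_sup A B))
  simp only [CommSq.shortComplex'_X₁, CommSq.shortComplex'_X₂, CommSq.shortComplex'_X₃] at this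
  rw [add_comm, ← this, hZ.biprod]

lemma phase_eq_arg_cokernel {X : 𝒜} {P Q : Subobject X} (h : P ≤ Q) :
    phase (fun S : Subobject X => Z S) P Q = (Z (cokernel (Subobject.ofLE P Q h))).arg := by
  rw [phase, hZ.eq_add_cokernel (Subobject.ofLE P Q h), add_sub_cancel_left]

lemma exists_le_le_of_mono_cokernel {X : 𝒜} {P Q : Subobject X} (h : P ≤ Q) {A : 𝒜}
    (g : A ⟶ cokernel (Subobject.ofLE P Q h)) [Mono g] :
    ∃ D : Subobject X, P ≤ D ∧ D ≤ Q ∧ Z D = Z P + Z A := by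
  let p := cokernel.π (Subobject.ofLE P Q h) ≫ cokernel.π g
  refine ⟨Subobject.mk (kernel.ι p ≫ Q.arrow),
    Subobject.le_mk_of_comm (kernel.lift p (Subobject.ofLE P Q h) (by simp [p])) (by simp),
    Subobject.mk_le_of_comm (kernel.ι p) rfl, ?_⟩
  rw [hZ.congr_iso (Subobject.underlyingIso _)]
  linear_combination hZ.eq_add_cokernel g + hZ.eq_add_cokernel (Subobject.ofLE P Q h)
    - hZ.eq_kernel_add p

end IsAdditive

def IsSemistable (Z : 𝒜 → ℂ) (F : 𝒜) : Prop :=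
  ¬IsZero F ∧ ∀ (A : 𝒜) (g : A ⟶ F), Mono g → ¬IsZero A → (Z A).arg ≤ (Z F).arg

lemma IsSemistable.of_iso {Z : 𝒜 → ℂ} (hZ : IsAdditive Z) {F F' : 𝒜} (hF : IsSemistable Z F)
    (e : F ≅ F') : IsSemistable Z F' :=
  ⟨fun h => hF.1 (h.of_iso e),
    fun A g _ hA => hZ.congr_iso e ▸ hF.2 A (g ≫ e.inv) inferInstance hA⟩

section StabilityFunction

variable {Z : 𝒜 → ℂ} (hZ : IsAdditive Z) (hpos : ∀ X : 𝒜, ¬IsZero X → 0 < (Z X).arg)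
include hZ hpos

lemma phase_pos {X : 𝒜} {P Q : Subobject X} (h : P < Q) :
    0 < phase (fun S : Subobject X => Z S) P Q := by
  rw [hZ.phase_eq_arg_cokernel h.le]
  exact hpos _ (Subobject.not_isZero_cokernel_ofLE h)

lemma isSemistable_cokernel_ofLE {X : 𝒜} {P Q : Subobject X} (hPQ : P < Q)
    (hss : ∀ D, P < D → D ≤ Q →
      phase (fun S : Subobject X => Z S) P D ≤ phase (fun S : Subobject X => Z S) P Q) :
    IsSemistable Z (cokernel (Subobject.ofLE P Q hPQ.le)) := by
  refine ⟨Subobject.not_isZero_cokernel_ofLE hPQ, fun A g _ hA => ?_⟩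
  obtain ⟨D, hPD, hDQ, hD⟩ := hZ.exists_le_le_of_mono_cokernel hPQ.le g
  have hPD' : P < D := hPD.lt_of_ne fun hPD => (hpos A hA).ne' (by
    rw [hPD, left_eq_add] at hD
    rw [hD, Complex.arg_zero])
  have := hss D hPD' hDQ
  rwa [phase, hD, add_sub_cancel_left, hZ.phase_eq_arg_cokernel hPQ.le] at this

end StabilityFunction

noncomputable section Filtration

variable {E : 𝒜} {N : ℕ} {c : Fin (N + 1) → Subobject E}

def filtrationObj (c : Fin (N + 1) → Subobject E) : Fin (N + 1) → 𝒜 :=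
  Function.update (fun i => (c i : 𝒜)) (Fin.last N) E

def filtrationObjIso (hc : c (Fin.last N) = ⊤) (i : Fin (N + 1)) :
    filtrationObj c i ≅ (c i : 𝒜) :=
  if h : i = Fin.last N then
    eqToIso (by rw [filtrationObj, h, Function.update_self]) ≪≫
      (asIso (⊤ : Subobject E).arrow).symm ≪≫ eqToIso (by rw [h, hc])
  else eqToIso (Function.update_of_ne h _ _)

variable (hc : c (Fin.last N) = ⊤) (hle : ∀ j : Fin N, c j.castSucc ≤ c j.succ)

def filtrationMap (j : Fin N) : filtrationObj c j.castSucc ⟶ filtrationObj c j.succ :=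
  (filtrationObjIso hc _).hom ≫ Subobject.ofLE _ _ (hle j) ≫ (filtrationObjIso hc _).inv

instance (j : Fin N) : Mono (filtrationMap hc hle j) := by
  unfold filtrationMap
  infer_instance

def cokernelFiltrationMapIso (j : Fin N) :
    cokernel (filtrationMap hc hle j) ≅ cokernel (Subobject.ofLE _ _ (hle j)) :=
  cokernelEpiComp _ _ ≪≫ cokernelCompIsIso _ _

end Filtration

end Abelian

end HarderNarasimhan

open HarderNarasimhan

theorem stability_function_has_HN_property_general
    {𝒜 : Type*} [Category 𝒜] [Abelian 𝒜]
    (hnoeth : ∀ X : 𝒜, IsNoetherianObject X)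
    (hartin : ∀ X : 𝒜, IsArtinianObject X)
    (Z : 𝒜 → ℂ)
    (hadd : ∀ S : ShortComplex 𝒜, S.ShortExact → Z S.X₂ = Z S.X₁ + Z S.X₃)
    (hH : ∀ E : 𝒜, ¬ IsZero E → Z E ≠ 0 ∧ 0 < Complex.arg (Z E))
    (E : 𝒜) :
    ∃ (N : ℕ) (obj : Fin (N + 1) → 𝒜)
      (f : ∀ j : Fin N, obj j.castSucc ⟶ obj j.succ),
      IsZero (obj 0) ∧ obj (Fin.last N) = E ∧
      (∀ j, Mono (f j)) ∧
      (∀ j : Fin N,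
        ¬ IsZero (cokernel (f j)) ∧
        (∀ (A : 𝒜) (g : A ⟶ cokernel (f j)), Mono g → ¬ IsZero A →
          Complex.arg (Z A) ≤ Complex.arg (Z (cokernel (f j))))) ∧
      (∀ j j' : Fin N, j < j' →
        Complex.arg (Z (cokernel (f j'))) < Complex.arg (Z (cokernel (f j)))) := by
  have hZ : IsAdditive Z := hadd
  have hpos : ∀ X : 𝒜, ¬IsZero X → 0 < (Z X).arg := fun X hX => (hH X hX).2
  have := hnoeth E
  have := hartin E
  obtain ⟨N, c, hc0, hcN, hc⟩ :=
    exists_isHNChain (fun h => phase_pos hZ hpos h) hZ.sup_add_inf (⊥ : Subobject E)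
  have hle j := (hc.lt j).le
  have harg (j : Fin N) : (Z (cokernel (filtrationMap hcN hle j))).arg =
      phase (fun S : Subobject E => Z S) (c j.castSucc) (c j.succ) := by
    rw [hZ.congr_iso (cokernelFiltrationMapIso hcN hle j), hZ.phase_eq_arg_cokernel]
  refine ⟨N, filtrationObj c, filtrationMap hcN hle,
    (hc0 ▸ (isZero_zero 𝒜).of_iso Subobject.botCoeIsoZero).of_iso (filtrationObjIso hcN 0),
    Function.update_self .., inferInstance,
    fun j => ((isSemistable_cokernel_ofLE hZ hpos (hc.lt j) (hc.semistable j)).of_iso hZ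
      (cokernelFiltrationMapIso hcN hle j).symm), fun j j' hjj' => ?_⟩
  rw [harg, harg]
  exact hc.phase_lt j j' hjj'

/-- in a finite length abelian category (every object noetherian and
artinian), any stability function Z (additive on short exact sequences with values
in the semi-closed upper half plane on nonzero objects) automatically has the
Harder–Narasimhan property: every nonzero object admits a finite filtration with
semistable quotients of strictly decreasing phase.  Here the phase is encoded via
arg Z(E) ∈ (0, π], and semistability of F means arg Z(A) ≤ arg Z(F) for all
nonzero subobjects A ⊆ F. -/
theorem stability_function_has_HN_property
    {𝒜 : Type*} [Category 𝒜] [Abelian 𝒜]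
    (hnoeth : ∀ X : 𝒜, IsNoetherianObject X)
    (hartin : ∀ X : 𝒜, IsArtinianObject X)
    (Z : 𝒜 → ℂ)
    (hadd : ∀ S : ShortComplex 𝒜, S.ShortExact → Z S.X₂ = Z S.X₁ + Z S.X₃)
    (hH : ∀ E : 𝒜, ¬ IsZero E → Z E ≠ 0 ∧ 0 < Complex.arg (Z E))
    (E : 𝒜) (hE : ¬ IsZero E) :
    ∃ (N : ℕ) (obj : Fin (N + 1) → 𝒜)
      (f : ∀ j : Fin N, obj j.castSucc ⟶ obj j.succ),
      IsZero (obj 0) ∧ obj (Fin.last N) = E ∧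
      (∀ j, Mono (f j)) ∧
      (∀ j : Fin N,
        ¬ IsZero (cokernel (f j)) ∧
        (∀ (A : 𝒜) (g : A ⟶ cokernel (f j)), Mono g → ¬ IsZero A →
          Complex.arg (Z A) ≤ Complex.arg (Z (cokernel (f j))))) ∧
      (∀ j j' : Fin N, j < j' →
        Complex.arg (Z (cokernel (f j'))) < Complex.arg (Z (cokernel (f j)))) :=
  stability_function_has_HN_property_general hnoeth hartin Z hadd hH E
end
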